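/- In every trapezoid representation (l, r, L, R) of the order P, both intervals of N are strictly contained in the corresponding intervals of 2: l 2 < l N, r N < r 2, L 2 < L N, and R N < R 2. -/

import Mathlib

/-- The twelve elements {1, 2, 3, a, b, c, d, w, x, y, z, N} of the order P. -/
inductive PElt : Type
  | e1 | e2 | e3 | a | b | c | d | w | x | y | z | N
  deriving DecidableEq

instance : Fintype PElt where
  elems := {PElt.e1, PElt.e2, PElt.e3, PElt.a, PElt.b, PElt.c, PElt.d, PElt.w, PElt.x, PElt.y,
    PElt.z, PElt.N}
  complete := fun u => by cases u <;> decide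

open PElt

/-- The order P: its strict comparabilities are exactly
1≺2, 2≺3, 1≺3, 1≺d, 1≺z, 1≺N, a≺b, a≺c, a≺d, a≺z, a≺3, a≺N, b≺c, b≺d,
w≺d, w≺x, w≺y, w≺3, w≺z, w≺N, x≺y, x≺z, N≺3, N≺d, N≺z. -/
def PLT : PElt → PElt → Prop := fun u v =>
  (u, v) ∈ ([(e1, e2), (e2, e3), (e1, e3), (e1, d), (e1, z), (e1, N),
    (a, b), (a, c), (a, d), (a, z), (a, e3), (a, N), (b, c), (b, d),
    (w, d), (w, x), (w, y), (w, e3), (w, z), (w, N), (x, y), (x, z),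
    (N, e3), (N, d), (N, z)] : List (PElt × PElt))

/-- In every trapezoid representation of the order P, both intervals of N are
strictly contained in the corresponding intervals of 2. -/
theorem P_N_inside_two (l r L R : PElt → ℝ)
    (hlr : ∀ u, l u ≤ r u) (hLR : ∀ u, L u ≤ R u)
    (hrep : ∀ u v, PLT u v ↔ (r u < l v ∧ R u < L v)) :
    l e2 < l N ∧ r N < r e2 ∧ L e2 < L N ∧ R N < R e2 := by
  have hinc : ∀ u v, ¬ PLT u v → l v ≤ r u ∨ L v ≤ R u := by
    intro u v h
    by_contra hc
    push_neg at hc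
    exact h ((hrep u v).mpr ⟨hc.1, hc.2⟩)

  have hlr_e1 := hlr e1
  have hLR_e1 := hLR e1
  have hlr_e2 := hlr e2
  have hLR_e2 := hLR e2
  have hlr_e3 := hlr e3
  have hLR_e3 := hLR e3
  have hlr_a := hlr a
  have hLR_a := hLR a
  have hlr_b := hlr b
  have hLR_b := hLR b
  have hlr_c := hlr c
  have hLR_c := hLR c
  have hlr_d := hlr d
  have hLR_d := hLR d
  have hlr_w := hlr w
  have hLR_w := hLR w
  have hlr_x := hlr x
  have hLR_x := hLR x
  have hlr_y := hlr y
  have hLR_y := hLR y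
  have hlr_z := hlr z
  have hLR_z := hLR z
  have hlr_N := hlr N
  have hLR_N := hLR N
  obtain ⟨hc1_e1_e2, hc2_e1_e2⟩ := (hrep e1 e2).mp (by unfold PLT; decide)
  obtain ⟨hc1_e2_e3, hc2_e2_e3⟩ := (hrep e2 e3).mp (by unfold PLT; decide)
  obtain ⟨hc1_e1_e3, hc2_e1_e3⟩ := (hrep e1 e3).mp (by unfold PLT; decide)
  obtain ⟨hc1_e1_d, hc2_e1_d⟩ := (hrep e1 d).mp (by unfold PLT; decide)
  obtain ⟨hc1_e1_z, hc2_e1_z⟩ := (hrep e1 z).mp (by unfold PLT; decide)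
  obtain ⟨hc1_e1_N, hc2_e1_N⟩ := (hrep e1 N).mp (by unfold PLT; decide)
  obtain ⟨hc1_a_b, hc2_a_b⟩ := (hrep a b).mp (by unfold PLT; decide)
  obtain ⟨hc1_a_c, hc2_a_c⟩ := (hrep a c).mp (by unfold PLT; decide)
  obtain ⟨hc1_a_d, hc2_a_d⟩ := (hrep a d).mp (by unfold PLT; decide)
  obtain ⟨hc1_a_z, hc2_a_z⟩ := (hrep a z).mp (by unfold PLT; decide)
  obtain ⟨hc1_a_e3, hc2_a_e3⟩ := (hrep a e3).mp (by unfold PLT; decide)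
  obtain ⟨hc1_a_N, hc2_a_N⟩ := (hrep a N).mp (by unfold PLT; decide)
  obtain ⟨hc1_b_c, hc2_b_c⟩ := (hrep b c).mp (by unfold PLT; decide)
  obtain ⟨hc1_b_d, hc2_b_d⟩ := (hrep b d).mp (by unfold PLT; decide)
  obtain ⟨hc1_w_d, hc2_w_d⟩ := (hrep w d).mp (by unfold PLT; decide)
  obtain ⟨hc1_w_x, hc2_w_x⟩ := (hrep w x).mp (by unfold PLT; decide)
  obtain ⟨hc1_w_y, hc2_w_y⟩ := (hrep w y).mp (by unfold PLT; decide)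
  obtain ⟨hc1_w_e3, hc2_w_e3⟩ := (hrep w e3).mp (by unfold PLT; decide)
  obtain ⟨hc1_w_z, hc2_w_z⟩ := (hrep w z).mp (by unfold PLT; decide)
  obtain ⟨hc1_w_N, hc2_w_N⟩ := (hrep w N).mp (by unfold PLT; decide)
  obtain ⟨hc1_x_y, hc2_x_y⟩ := (hrep x y).mp (by unfold PLT; decide)
  obtain ⟨hc1_x_z, hc2_x_z⟩ := (hrep x z).mp (by unfold PLT; decide)
  obtain ⟨hc1_N_e3, hc2_N_e3⟩ := (hrep N e3).mp (by unfold PLT; decide)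
  obtain ⟨hc1_N_d, hc2_N_d⟩ := (hrep N d).mp (by unfold PLT; decide)
  obtain ⟨hc1_N_z, hc2_N_z⟩ := (hrep N z).mp (by unfold PLT; decide)
  have goal_lN : ¬ (l N ≤ l e2) := by
    intro hneg
    rcases hinc a e2 (by unfold PLT; decide) with h_a_e2 | h_a_e2
    · linarith
    rcases hinc w e2 (by unfold PLT; decide) with h_w_e2 | h_w_e2
    · linarith
    rcases hinc e1 b (by unfold PLT; decide) with h_e1_b | h_e1_b
    case inr => linarith
    rcases hinc e1 c (by unfold PLT; decide) with h_e1_c | h_e1_c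
    case inr => linarith
    rcases hinc e1 x (by unfold PLT; decide) with h_e1_x | h_e1_x
    case inr => linarith
    rcases hinc e1 y (by unfold PLT; decide) with h_e1_y | h_e1_y
    case inr => linarith
    rcases hinc b e2 (by unfold PLT; decide) with h_b_e2 | h_b_e2
    · linarith
    rcases hinc b e3 (by unfold PLT; decide) with h_b_e3 | h_b_e3
    · linarith
    rcases hinc b z (by unfold PLT; decide) with h_b_z | h_b_z
    · linarith
    rcases hinc b N (by unfold PLT; decide) with h_b_N | h_b_N
    · linarith
    rcases hinc w c (by unfold PLT; decide) with h_w_c | h_w_c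
    case inr => linarith
    rcases hinc x e2 (by unfold PLT; decide) with h_x_e2 | h_x_e2
    · linarith
    rcases hinc x e3 (by unfold PLT; decide) with h_x_e3 | h_x_e3
    · linarith
    rcases hinc x c (by unfold PLT; decide) with h_x_c | h_x_c
    case inr => linarith
    rcases hinc x d (by unfold PLT; decide) with h | h <;> linarith
  have goal_rN : ¬ (r e2 ≤ r N) := by
    intro hneg
    rcases hinc e2 d (by unfold PLT; decide) with h_e2_d | h_e2_d
    · linarith
    rcases hinc e2 z (by unfold PLT; decide) with h_e2_z | h_e2_z
    · linarith
    rcases hinc b e3 (by unfold PLT; decide) with h_b_e3 | h_b_e3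
    case inr => linarith
    rcases hinc w c (by unfold PLT; decide) with h_w_c | h_w_c
    · linarith
    rcases hinc x e3 (by unfold PLT; decide) with h_x_e3 | h_x_e3
    case inr => linarith
    rcases hinc N c (by unfold PLT; decide) with h_N_c | h_N_c
    · linarith
    rcases hinc N y (by unfold PLT; decide) with h_N_y | h_N_y
    · linarith
    rcases hinc e1 c (by unfold PLT; decide) with h_e1_c | h_e1_c
    · linarith
    rcases hinc e1 y (by unfold PLT; decide) with h_e1_y | h_e1_y
    · linarith
    rcases hinc e2 c (by unfold PLT; decide) with h_e2_c | h_e2_c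
    · linarith
    rcases hinc e2 y (by unfold PLT; decide) with h_e2_y | h_e2_y
    · linarith
    rcases hinc a e2 (by unfold PLT; decide) with h_a_e2 | h_a_e2
    case inr => linarith
    rcases hinc a x (by unfold PLT; decide) with h_a_x | h_a_x
    case inr => linarith
    rcases hinc a y (by unfold PLT; decide) with h | h <;> linarith
  have goal_LN : ¬ (L N ≤ L e2) := by
    intro hneg
    rcases hinc a e2 (by unfold PLT; decide) with h_a_e2 | h_a_e2
    case inr => linarith
    rcases hinc w e2 (by unfold PLT; decide) with h_w_e2 | h_w_e2
    case inr => linarith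
    rcases hinc e1 b (by unfold PLT; decide) with h_e1_b | h_e1_b
    · linarith
    rcases hinc e1 c (by unfold PLT; decide) with h_e1_c | h_e1_c
    · linarith
    rcases hinc e1 x (by unfold PLT; decide) with h_e1_x | h_e1_x
    · linarith
    rcases hinc e1 y (by unfold PLT; decide) with h_e1_y | h_e1_y
    · linarith
    rcases hinc b e2 (by unfold PLT; decide) with h_b_e2 | h_b_e2
    case inr => linarith
    rcases hinc b e3 (by unfold PLT; decide) with h_b_e3 | h_b_e3
    case inr => linarith
    rcases hinc b z (by unfold PLT; decide) with h_b_z | h_b_z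
    case inr => linarith
    rcases hinc b N (by unfold PLT; decide) with h_b_N | h_b_N
    case inr => linarith
    rcases hinc w c (by unfold PLT; decide) with h_w_c | h_w_c
    · linarith
    rcases hinc x e2 (by unfold PLT; decide) with h_x_e2 | h_x_e2
    case inr => linarith
    rcases hinc x e3 (by unfold PLT; decide) with h_x_e3 | h_x_e3
    case inr => linarith
    rcases hinc x c (by unfold PLT; decide) with h_x_c | h_x_c
    · linarith
    rcases hinc x d (by unfold PLT; decide) with h | h <;> linarith
  have goal_RN : ¬ (R e2 ≤ R N) := by
    intro hneg
    rcases hinc e2 d (by unfold PLT; decide) with h_e2_d | h_e2_d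
    case inr => linarith
    rcases hinc e2 z (by unfold PLT; decide) with h_e2_z | h_e2_z
    case inr => linarith
    rcases hinc b e3 (by unfold PLT; decide) with h_b_e3 | h_b_e3
    · linarith
    rcases hinc w c (by unfold PLT; decide) with h_w_c | h_w_c
    case inr => linarith
    rcases hinc x e3 (by unfold PLT; decide) with h_x_e3 | h_x_e3
    · linarith
    rcases hinc N c (by unfold PLT; decide) with h_N_c | h_N_c
    case inr => linarith
    rcases hinc N y (by unfold PLT; decide) with h_N_y | h_N_y
    case inr => linarith
    rcases hinc e1 c (by unfold PLT; decide) with h_e1_c | h_e1_c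
    case inr => linarith
    rcases hinc e1 y (by unfold PLT; decide) with h_e1_y | h_e1_y
    case inr => linarith
    rcases hinc e2 c (by unfold PLT; decide) with h_e2_c | h_e2_c
    case inr => linarith
    rcases hinc e2 y (by unfold PLT; decide) with h_e2_y | h_e2_y
    case inr => linarith
    rcases hinc a e2 (by unfold PLT; decide) with h_a_e2 | h_a_e2
    · linarith
    rcases hinc a x (by unfold PLT; decide) with h_a_x | h_a_x
    · linarith
    rcases hinc a y (by unfold PLT; decide) with h | h <;> linarith
  exact ⟨not_le.mp goal_lN, not_le.mp goal_rN, not_le.mp goal_LN, not_le.mp goal_RN⟩
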